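/- arXiv:2002.04670 — 5 statements merged into one kernel-verified Lean document; each statement's English description precedes it below -/
import Mathlib

section
/- Let ψ: ℝ^d → ℝ ∪ {∞} be given by ψ(x) = ψ'(x) if x ∈ x⁰ + Range(P) and ψ(x) = ∞ otherwise, where P is a projection matrix and ψ' is convex. Then for any α > 0 and any x, y ∈ ℝ^d, ‖prox_{αψ}(x) − prox_{αψ}(y)‖² ≤ ‖x − y‖²_P, where ‖z‖²_P = ⟨P z, z⟩. -/
/-!
The first-order optimality condition of the prox problem on the convex set `x⁰ + Range P` is the
variational inequality `⟪x - p, u - p⟫ ≤ α ψ'(u) - α ψ'(p)`. Adding it at `p = prox(x), u = prox(y)`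
and vice versa gives firm nonexpansiveness `‖p - q‖² ≤ ⟪p - q, x - y⟫`. Since `p - q ∈ Range P`
and `P` is a symmetric projection, `⟪p - q, x - y⟫ = ⟪p - q, P(x - y)⟫ ≤ ‖p - q‖ ‖P(x - y)‖`,
so `‖p - q‖² ≤ ‖P(x - y)‖² = ⟪P(x - y), x - y⟫`.
-/

open Filter Topology
open scoped RealInnerProductSpace

lemma nonneg_of_forall_add_mul_nonneg {a b : ℝ} (h : ∀ t, 0 < t → t ≤ 1 → 0 ≤ a + t * b) :
    0 ≤ a := by
  have hlim : Tendsto (fun t => a + t * b) (𝓝[>] 0) (𝓝 a) := by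
    have hcont : Continuous fun t : ℝ => a + t * b := by fun_prop
    simpa using (hcont.tendsto 0).mono_left nhdsWithin_le_nhds
  refine ge_of_tendsto hlim ?_
  filter_upwards [Ioo_mem_nhdsGT (zero_lt_one' ℝ)] with t ht using h t ht.1 ht.2.le

variable {E : Type*} [NormedAddCommGroup E] [InnerProductSpace ℝ E]

lemma inner_sub_le_of_isMinOn_add_sq_norm {K : Set E} (hK : Convex ℝ K) {g : E → ℝ}
    (hg : ConvexOn ℝ K g) {x p : E} (hp : p ∈ K)
    (hmin : IsMinOn (fun u => g u + ‖u - x‖ ^ 2 / 2) K p) {u : E} (hu : u ∈ K) :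
    ⟪x - p, u - p⟫ ≤ g u - g p := by
  suffices ∀ t, 0 < t → t ≤ 1 →
      0 ≤ (g u - g p - ⟪x - p, u - p⟫) + t * (‖u - p‖ ^ 2 / 2) by
    linarith [nonneg_of_forall_add_mul_nonneg this]
  intro t ht0 ht1
  have hv : (1 - t) • p + t • u ∈ K := hK hp hu (by linarith) ht0.le (by ring)
  have hmin_v := isMinOn_iff.mp hmin _ hv
  have hconv : g ((1 - t) • p + t • u) ≤ (1 - t) * g p + t * g u :=
    hg.2 hp hu (by linarith) ht0.le (by ring)
  have hnorm : ‖(1 - t) • p + t • u - x‖ ^ 2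
      = ‖p - x‖ ^ 2 - 2 * t * ⟪x - p, u - p⟫ + t ^ 2 * ‖u - p‖ ^ 2 := by
    have : (1 - t) • p + t • u - x = (p - x) + t • (u - p) := by module
    rw [this, norm_add_sq_real, real_inner_smul_right, norm_smul, Real.norm_eq_abs, mul_pow,
      sq_abs, ← neg_sub x p, inner_neg_left]
    ring
  -- `hmin_v`, `hconv` and `hnorm` combine to `t * goal ≥ 0`, and `t > 0`.
  nlinarith

lemma sq_norm_sub_le_inner_of_isMinOn_add_sq_norm {K : Set E} (hK : Convex ℝ K) {g : E → ℝ}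
    (hg : ConvexOn ℝ K g) {x y p q : E} (hp : p ∈ K) (hq : q ∈ K)
    (hpmin : IsMinOn (fun u => g u + ‖u - x‖ ^ 2 / 2) K p)
    (hqmin : IsMinOn (fun u => g u + ‖u - y‖ ^ 2 / 2) K q) :
    ‖p - q‖ ^ 2 ≤ ⟪p - q, x - y⟫ := by
  have hpq := inner_sub_le_of_isMinOn_add_sq_norm hK hg hp hpmin hq
  have hqp := inner_sub_le_of_isMinOn_add_sq_norm hK hg hq hqmin hp
  have hsplit : ⟪p - q, x - y⟫ - ‖p - q‖ ^ 2 = -⟪x - p, q - p⟫ - ⟪y - q, p - q⟫ := by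
    rw [← real_inner_self_eq_norm_sq]
    simp only [inner_sub_left, inner_sub_right, real_inner_comm]
    ring
  linarith

lemma norm_le_of_sq_norm_le_inner {z w : E} (h : ‖z‖ ^ 2 ≤ ⟪z, w⟫) : ‖z‖ ≤ ‖w‖ := by
  have hcs := real_inner_le_norm z w
  nlinarith [norm_nonneg z, norm_nonneg w]

section SymmetricProjection

variable {P : E →ₗ[ℝ] E} (hidem : ∀ x, P (P x) = P x) (hsym : ∀ x y, ⟪P x, y⟫ = ⟪x, P y⟫)
include hidem hsym

lemma inner_apply_self_eq_sq_norm_of_idem_of_symm (w : E) : ⟪P w, w⟫ = ‖P w‖ ^ 2 := by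
  rw [← real_inner_self_eq_norm_sq, ← hsym, hidem]

lemma inner_eq_inner_apply_of_mem_range {z : E} (hz : z ∈ LinearMap.range P) (w : E) :
    ⟪z, w⟫ = ⟪z, P w⟫ := by
  obtain ⟨v, rfl⟩ := hz
  rw [← hsym, hidem]

end SymmetricProjection

/-- Prox of a convex function whose domain is an affine subspace `x⁰ + Range P`
(`P` a symmetric projection) is contractive in the `P`-seminorm. -/
theorem prox_contractive_in_P_norm
    {d : ℕ}
    (P : EuclideanSpace ℝ (Fin d) →ₗ[ℝ] EuclideanSpace ℝ (Fin d))
    (hidem : ∀ x, P (P x) = P x)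
    (hsym : ∀ x y, ⟪P x, y⟫ = ⟪x, P y⟫)
    (x0 : EuclideanSpace ℝ (Fin d))
    (ψ' : EuclideanSpace ℝ (Fin d) → ℝ)
    (hψ' : ConvexOn ℝ Set.univ ψ')
    (α : ℝ) (hα : 0 < α)
    (x y px py : EuclideanSpace ℝ (Fin d))
    (hpx_mem : px - x0 ∈ LinearMap.range P)
    (hpy_mem : py - x0 ∈ LinearMap.range P)
    (hpx_min : ∀ u : EuclideanSpace ℝ (Fin d), u - x0 ∈ LinearMap.range P →
      α * ψ' px + ‖px - x‖ ^ 2 / 2 ≤ α * ψ' u + ‖u - x‖ ^ 2 / 2)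
    (hpy_min : ∀ u : EuclideanSpace ℝ (Fin d), u - x0 ∈ LinearMap.range P →
      α * ψ' py + ‖py - y‖ ^ 2 / 2 ≤ α * ψ' u + ‖u - y‖ ^ 2 / 2) :
    ‖px - py‖ ^ 2 ≤ ⟪P (x - y), x - y⟫ := by
  set K := AffineSubspace.mk' x0 (LinearMap.range P)
  have hαψ' : ConvexOn ℝ K (fun u => α * ψ' u) :=
    (hψ'.smul hα.le).subset (Set.subset_univ _) K.convex
  have hfirm : ‖px - py‖ ^ 2 ≤ ⟪px - py, x - y⟫ :=
    sq_norm_sub_le_inner_of_isMinOn_add_sq_norm K.convex hαψ'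
      (AffineSubspace.mem_mk'.mpr hpx_mem) (AffineSubspace.mem_mk'.mpr hpy_mem)
      (isMinOn_iff.mpr fun u hu => hpx_min u (AffineSubspace.mem_mk'.mp hu))
      (isMinOn_iff.mpr fun u hu => hpy_min u (AffineSubspace.mem_mk'.mp hu))
  have hdiff_mem : px - py ∈ LinearMap.range P := by
    simpa using Submodule.sub_mem _ hpx_mem hpy_mem
  rw [inner_eq_inner_apply_of_mem_range hidem hsym hdiff_mem] at hfirm
  rw [inner_apply_self_eq_sq_norm_of_idem_of_symm hidem hsym]
  exact pow_le_pow_left₀ (norm_nonneg _) (norm_le_of_sq_norm_le_inner hfirm) 2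
end

section
/- Let f: ℝ^d → ℝ be convex and M-smooth, i.e., f(x) ≤ f(y) + ⟨∇f(y), x−y⟩ + ½‖x−y‖²_M for all x, y, where M is symmetric positive semidefinite. Then for all x, y ∈ ℝ^d, the Bregman divergence satisfies D_f(x, y) ≥ ½‖∇f(x) − ∇f(y)‖²_{M†}, where M† is the Moore–Penrose pseudoinverse and D_f(x,y) = f(x) − f(y) − ⟨∇f(y), x−y⟩. -/
open Matrix

/-- For a convex, `M`-smooth differentiable function (with gradient `f'`), the
Bregman divergence is bounded below by half the squared `M†`-norm of gradient
differences, where `M†` is the Moore–Penrose pseudoinverse of the symmetric PSD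
matrix `M`. -/
theorem bregman_lower_bound_pseudoinverse
    {d : ℕ}
    (M Mdag : Matrix (Fin d) (Fin d) ℝ)
    (hM : M.PosSemidef)
    -- Moore–Penrose pseudoinverse axioms
    (hMP1 : M * Mdag * M = M)
    (hMP2 : Mdag * M * Mdag = Mdag)
    (hMP3 : (M * Mdag)ᵀ = M * Mdag)
    (hMP4 : (Mdag * M)ᵀ = Mdag * M)
    (f : (Fin d → ℝ) → ℝ) (f' : (Fin d → ℝ) → (Fin d → ℝ))
    (hdiff : ∀ x : Fin d → ℝ,
      HasGradientAt (fun z : EuclideanSpace ℝ (Fin d) => f (WithLp.equiv 2 (Fin d → ℝ) z))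
        ((WithLp.equiv 2 (Fin d → ℝ)).symm (f' x)) ((WithLp.equiv 2 (Fin d → ℝ)).symm x))
    (hconv : ∀ x y : Fin d → ℝ, f x ≥ f y + f' y ⬝ᵥ (x - y))
    (hsmooth : ∀ x y : Fin d → ℝ,
      f x ≤ f y + f' y ⬝ᵥ (x - y) + (1 / 2) * (M.mulVec (x - y) ⬝ᵥ (x - y)))
    (hrange : ∀ x y : Fin d → ℝ, ∃ u, M.mulVec u = f' x - f' y) :
    ∀ x y : Fin d → ℝ,
      f x - f y - f' y ⬝ᵥ (x - y) ≥
        (1 / 2) * (Mdag.mulVec (f' x - f' y) ⬝ᵥ (f' x - f' y)) := by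
  intro x y
  set g := f' x - f' y with hg
  obtain ⟨u, hu⟩ := hrange x y
  set z := x - Mdag.mulVec g with hz
  rw [← hg] at hu
  have hMg : M.mulVec (Mdag.mulVec g) = g := by
    rw [← hu, mulVec_mulVec, mulVec_mulVec, hMP1]
  have h1 := hconv z y
  have h2 := hsmooth z x
  have hzx : z - x = -(Mdag.mulVec g) := by
    rw [hz]; abel
  have key : M.mulVec (z - x) ⬝ᵥ (z - x) = g ⬝ᵥ Mdag.mulVec g := by
    rw [hzx, mulVec_neg, neg_dotProduct, dotProduct_neg, neg_neg, hMg]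
  have e1 : f' y ⬝ᵥ (z - y) = f' y ⬝ᵥ (x - y) + f' y ⬝ᵥ (z - x) := by
    rw [← dotProduct_add]
    congr 1
    abel
  have e2 : f' x ⬝ᵥ (z - x) = f' y ⬝ᵥ (z - x) - g ⬝ᵥ Mdag.mulVec g := by
    have : f' x ⬝ᵥ (z - x) = f' y ⬝ᵥ (z - x) + g ⬝ᵥ (z - x) := by
      rw [← add_dotProduct]
      congr 1
      rw [hg]; abel
    rw [this, hzx]
    simp [dotProduct_neg]
    ring
  have hcomm : Mdag.mulVec g ⬝ᵥ g = g ⬝ᵥ Mdag.mulVec g := dotProduct_comm _ _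
  linarith
end

section
/- Let f_j : ℝ^d → ℝ be convex, differentiable, M_j-smooth (M_j symmetric PSD), and bounded below. Then ∇f_j(x) ∈ Range(M_j) for all x ∈ ℝ^d. -/
/-!
Along a line `x + t • w` with `M w = 0` the quadratic term of the smoothness bound vanishes, so
`f (x + t • w) ≤ f x + t ⟪∇f x, w⟫`; as `f` is bounded below, `⟪∇f x, w⟫ = 0`. Thus `∇f x` is
orthogonal to `ker M`, which for symmetric `M` is `(range M)ᗮ`, so `∇f x ∈ range M`.
-/

open Matrix

lemma eq_zero_of_forall_le_add_mul {a c s : ℝ} (h : ∀ t : ℝ, c ≤ a + t * s) : s = 0 := by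
  by_contra hs
  have h1 := h ((c - a - 1) / s)
  rw [div_mul_cancel₀ _ hs] at h1
  linarith

lemma dotProduct_eq_zero_of_mulVec_eq_zero {ι : Type*} [Fintype ι] {M : Matrix ι ι ℝ}
    {f : (ι → ℝ) → ℝ} {g x w : ι → ℝ}
    (hsmooth : ∀ y, f y ≤ f x + g ⬝ᵥ (y - x) + (1 / 2) * (M *ᵥ (y - x) ⬝ᵥ (y - x)))
    (hbdd : ∃ c, ∀ y, c ≤ f y) (hw : M *ᵥ w = 0) : g ⬝ᵥ w = 0 := by
  obtain ⟨c, hc⟩ := hbdd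
  refine eq_zero_of_forall_le_add_mul (a := f x) (c := c) fun t => ?_
  have hline := hsmooth (x + t • w)
  rw [add_sub_cancel_left, mulVec_smul, hw, smul_zero, zero_dotProduct, dotProduct_smul,
    smul_eq_mul] at hline
  linarith [hc (x + t • w)]

theorem Matrix.IsHermitian.exists_mulVec_eq_of_forall_dotProduct_eq_zero {ι : Type*} [Fintype ι]
    [DecidableEq ι] {M : Matrix ι ι ℝ} (hM : M.IsHermitian) {v : ι → ℝ}
    (hv : ∀ w, M *ᵥ w = 0 → v ⬝ᵥ w = 0) : ∃ u, M *ᵥ u = v := by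
  set T := M.toEuclideanLin
  have hT : T.IsSymmetric := isSymmetric_toEuclideanLin_iff.mpr hM
  have hmem : WithLp.toLp 2 v ∈ LinearMap.range T := by
    rw [← (LinearMap.range T).orthogonal_orthogonal, hT.orthogonal_range]
    intro w hw
    have hMw : M *ᵥ w.ofLp = 0 := by simpa [T, toEuclideanLin, toLpLin_apply] using hw
    simpa [EuclideanSpace.inner_eq_star_dotProduct, dotProduct_comm] using hv _ hMw
  obtain ⟨u, hu⟩ := hmem
  exact ⟨u.ofLp, by simpa [T, toEuclideanLin, toLpLin_apply] using congrArg WithLp.ofLp hu⟩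

theorem grad_in_range_general
    {d : ℕ}
    (M : Matrix (Fin d) (Fin d) ℝ) (hM : M.PosSemidef)
    (f : (Fin d → ℝ) → ℝ) (f' : (Fin d → ℝ) → (Fin d → ℝ))
    (hsmooth : ∀ x y : Fin d → ℝ,
      f x ≤ f y + f' y ⬝ᵥ (x - y) + (1 / 2) * (M.mulVec (x - y) ⬝ᵥ (x - y)))
    (hbdd : ∃ c : ℝ, ∀ x : Fin d → ℝ, c ≤ f x) :
    ∀ x : Fin d → ℝ, ∃ u : Fin d → ℝ, M.mulVec u = f' x :=
  fun x => hM.isHermitian.exists_mulVec_eq_of_forall_dotProduct_eq_zero fun _ hw =>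
    dotProduct_eq_zero_of_mulVec_eq_zero (fun y => hsmooth y x) hbdd hw

/-- If `f_j` is convex, differentiable, `M_j`-smooth and bounded below, then
`∇f_j(x) ∈ Range(M_j)` for all `x`. -/
theorem grad_in_range
    {d : ℕ}
    (M : Matrix (Fin d) (Fin d) ℝ) (hM : M.PosSemidef)
    (f : (Fin d → ℝ) → ℝ) (f' : (Fin d → ℝ) → (Fin d → ℝ))
    (hdiff : ∀ x : Fin d → ℝ,
      HasGradientAt (fun z : EuclideanSpace ℝ (Fin d) => f (WithLp.equiv 2 (Fin d → ℝ) z))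
        ((WithLp.equiv 2 (Fin d → ℝ)).symm (f' x)) ((WithLp.equiv 2 (Fin d → ℝ)).symm x))
    (hconv : ∀ x y : Fin d → ℝ, f x ≥ f y + f' y ⬝ᵥ (x - y))
    (hsmooth : ∀ x y : Fin d → ℝ,
      f x ≤ f y + f' y ⬝ᵥ (x - y) + (1 / 2) * (M.mulVec (x - y) ⬝ᵥ (x - y)))
    (hbdd : ∃ c : ℝ, ∀ x : Fin d → ℝ, c ≤ f x) :
    ∀ x : Fin d → ℝ, ∃ u : Fin d → ℝ, M.mulVec u = f' x :=
  grad_in_range_general M hM f f' hsmooth hbdd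
end

section
/- Let S be a random self-adjoint projection operator on ℝ^{d×n} and A a deterministic linear operator commuting with S. For X, Y ∈ ℝ^{d×n} and Z = (I − S)X + S Y, the expectation satisfies 𝔼[‖A Z‖²] = ‖(I − 𝔼[S])^{1/2} A X‖² + ‖(𝔼[S])^{1/2} A Y‖², where the expectation is over S and ‖·‖ is the Frobenius norm. -/
open MeasureTheory

section EPPaux

variable {d n : ℕ}

private def ip (u v : Fin d → Fin n → ℝ) : ℝ := ∑ i, ∑ j, u i j * v i j

private lemma ip_comm (u v : Fin d → Fin n → ℝ) : ip u v = ip v u := by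
  simp [ip, mul_comm]

private lemma ip_add_right (u v w : Fin d → Fin n → ℝ) :
    ip u (v + w) = ip u v + ip u w := by
  simp [ip, mul_add, Finset.sum_add_distrib]

private lemma ip_sub_right (u v w : Fin d → Fin n → ℝ) :
    ip u (v - w) = ip u v - ip u w := by
  simp [ip, mul_sub, Finset.sum_sub_distrib]

private lemma ip_add_left (u v w : Fin d → Fin n → ℝ) :
    ip (u + v) w = ip u w + ip v w := by
  simp [ip, add_mul, Finset.sum_add_distrib]

private lemma ip_sub_left (u v w : Fin d → Fin n → ℝ) :
    ip (u - v) w = ip u w - ip v w := by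
  simp [ip, sub_mul, Finset.sum_sub_distrib]

private lemma ip_smul_right (u : Fin d → Fin n → ℝ) (c : ℝ) (v : Fin d → Fin n → ℝ) :
    ip u (c • v) = c * ip u v := by
  simp [ip, Finset.mul_sum]
  congr 1; ext i; congr 1; ext j; ring

/-- `ip u ·` as a continuous linear map. -/
private noncomputable def ipL (u : Fin d → Fin n → ℝ) :
    (Fin d → Fin n → ℝ) →L[ℝ] ℝ :=
  LinearMap.toContinuousLinearMap
    { toFun := fun v => ip u v
      map_add' := fun v w => ip_add_right u v w
      map_smul' := fun c v => by simpa using ip_smul_right u c v }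

private lemma ipL_apply (u v : Fin d → Fin n → ℝ) : ipL u v = ip u v := rfl

end EPPaux

/-- For a random self-adjoint projection operator `S` and a deterministic linear
operator `A` commuting with every realization of `S`, with `Z = (I - S)X + S Y`,
the expected squared Frobenius norm of `A Z` decomposes as
`𝔼‖A Z‖² = ‖(I - 𝔼S)^{1/2} A X‖² + ‖(𝔼S)^{1/2} A Y‖²`. Here `B = (I - 𝔼S)^{1/2}`
and `C = (𝔼S)^{1/2}` are the (self-adjoint, PSD) square roots. -/
theorem expected_projection_pythagoras
    {d n : ℕ} {Ω : Type*} [MeasurableSpace Ω] (μ : Measure Ω) [IsProbabilityMeasure μ]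
    (S : Ω → (((Fin d → Fin n → ℝ)) →ₗ[ℝ] (Fin d → Fin n → ℝ)))
    (A ES B C : ((Fin d → Fin n → ℝ)) →ₗ[ℝ] (Fin d → Fin n → ℝ))
    (hidem : ∀ ω X, S ω (S ω X) = S ω X)
    (hself : ∀ ω (X Y : Fin d → Fin n → ℝ),
      ∑ i, ∑ j, (S ω X) i j * Y i j = ∑ i, ∑ j, X i j * (S ω Y) i j)
    (hcomm : ∀ ω X, A (S ω X) = S ω (A X))
    (hS_int : ∀ X : Fin d → Fin n → ℝ, Integrable (fun ω => S ω X) μ)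
    (hES : ∀ X : Fin d → Fin n → ℝ, ∫ ω, S ω X ∂μ = ES X)
    -- `B` is the self-adjoint PSD square root of `I - 𝔼S`
    (hB_sq : ∀ X, B (B X) = X - ES X)
    (hB_self : ∀ X Y : Fin d → Fin n → ℝ,
      ∑ i, ∑ j, (B X) i j * Y i j = ∑ i, ∑ j, X i j * (B Y) i j)
    (hB_psd : ∀ X : Fin d → Fin n → ℝ, 0 ≤ ∑ i, ∑ j, (B X) i j * X i j)
    -- `C` is the self-adjoint PSD square root of `𝔼S`
    (hC_sq : ∀ X, C (C X) = ES X)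
    (hC_self : ∀ X Y : Fin d → Fin n → ℝ,
      ∑ i, ∑ j, (C X) i j * Y i j = ∑ i, ∑ j, X i j * (C Y) i j)
    (hC_psd : ∀ X : Fin d → Fin n → ℝ, 0 ≤ ∑ i, ∑ j, (C X) i j * X i j)
    (X Y : Fin d → Fin n → ℝ) (Z : Ω → (Fin d → Fin n → ℝ))
    (hZ : ∀ ω, Z ω = (X - S ω X) + S ω Y)
    (hint : Integrable (fun ω => ∑ i, ∑ j, (A (Z ω)) i j ^ 2) μ) :
    ∫ ω, ∑ i, ∑ j, (A (Z ω)) i j ^ 2 ∂μ =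
      (∑ i, ∑ j, (B (A X)) i j ^ 2) + ∑ i, ∑ j, (C (A Y)) i j ^ 2 := by
  set u := A X with hu
  set v := A Y with hv
  -- reinterpret self-adjointness hypotheses via ip
  have hselfip : ∀ ω (P Q : Fin d → Fin n → ℝ), ip (S ω P) Q = ip P (S ω Q) :=
    fun ω P Q => hself ω P Q
  -- pointwise identity
  have hpt : ∀ ω, (∑ i, ∑ j, (A (Z ω)) i j ^ 2)
      = ip u u - ip u (S ω u) + ip v (S ω v) := by
    intro ω
    have hAZ : A (Z ω) = (u - S ω u) + S ω v := by
      rw [hZ ω, map_add, map_sub, hcomm, hcomm]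
    have hsq : (∑ i, ∑ j, (A (Z ω)) i j ^ 2) = ip (A (Z ω)) (A (Z ω)) := by
      simp [ip, sq]
    rw [hsq, hAZ]
    have e1 : ip (S ω v) (S ω v) = ip v (S ω v) := by
      rw [hselfip, hidem]
    have e2 : ip (S ω u) (S ω v) = ip u (S ω v) := by
      rw [hselfip, hidem]
    have e3' : ip (S ω u) u = ip u (S ω u) := by rw [hselfip]
    have e4 : ip (S ω u) (S ω u) = ip u (S ω u) := by
      rw [hselfip, hidem]
    have e6 : ip (S ω v) u = ip v (S ω u) := by rw [hselfip]
    have e7 : ip (S ω v) (S ω u) = ip v (S ω u) := by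
      rw [hselfip, hidem]
    have expand : ip ((u - S ω u) + S ω v) ((u - S ω u) + S ω v)
        = ip u u - ip u (S ω u) - ip (S ω u) u + ip (S ω u) (S ω u)
          + (ip u (S ω v) - ip (S ω u) (S ω v))
          + (ip (S ω v) u - ip (S ω v) (S ω u))
          + ip (S ω v) (S ω v) := by
      simp only [ip_add_left, ip_add_right, ip_sub_left, ip_sub_right]
      ring
    rw [expand]
    linarith [e1, e2, e3', e4, e6, e7]
  -- integrate
  have hint1 : Integrable (fun ω => ip u (S ω u)) μ := by
    simpa [ipL_apply] using (ipL u).integrable_comp (hS_int u)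
  have hint2 : Integrable (fun ω => ip v (S ω v)) μ := by
    simpa [ipL_apply] using (ipL v).integrable_comp (hS_int v)
  have hI1 : ∫ ω, ip u (S ω u) ∂μ = ip u (ES u) := by
    have := (ipL u).integral_comp_comm (hS_int u)
    simpa [ipL_apply, hES u] using this
  have hI2 : ∫ ω, ip v (S ω v) ∂μ = ip v (ES v) := by
    have := (ipL v).integral_comp_comm (hS_int v)
    simpa [ipL_apply, hES v] using this
  have hInt : ∫ ω, ∑ i, ∑ j, (A (Z ω)) i j ^ 2 ∂μ
      = ip u u - ip u (ES u) + ip v (ES v) := by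
    calc ∫ ω, ∑ i, ∑ j, (A (Z ω)) i j ^ 2 ∂μ
        = ∫ ω, (ip u u - ip u (S ω u) + ip v (S ω v)) ∂μ := by
          exact integral_congr_ae (Filter.Eventually.of_forall hpt)
      _ = ∫ ω, (ip u u - ip u (S ω u)) ∂μ + ∫ ω, ip v (S ω v) ∂μ := by
          exact integral_add ((integrable_const _).sub hint1) hint2
      _ = (∫ ω, (ip u u : ℝ) ∂μ) - (∫ ω, ip u (S ω u) ∂μ) + ∫ ω, ip v (S ω v) ∂μ := by
          rw [integral_sub (integrable_const _) hint1]
      _ = ip u u - ip u (ES u) + ip v (ES v) := by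
          rw [hI1, hI2, integral_const]; simp
  rw [hInt]
  have hbu : ip u u - ip u (ES u) = ∑ i, ∑ j, (B u) i j ^ 2 := by
    have h1 : ip u u - ip u (ES u) = ip u (B (B u)) := by
      rw [hB_sq, ip_sub_right]
    have h2 : ip (B u) (B u) = ip u (B (B u)) := hB_self u (B u)
    have h3 : (∑ i, ∑ j, (B u) i j ^ 2) = ip (B u) (B u) := by simp [ip, sq]
    rw [h1, ← h2, h3]
  have hcv : ip v (ES v) = ∑ i, ∑ j, (C v) i j ^ 2 := by
    have h1 : ip v (ES v) = ip v (C (C v)) := by rw [hC_sq]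
    have h2 : ip (C v) (C v) = ip v (C (C v)) := hC_self v (C v)
    have h3 : (∑ i, ∑ j, (C v) i j ^ 2) = ip (C v) (C v) := by simp [ip, sq]
    rw [h1, ← h2, h3]
  rw [hbu, hcv]
end

section
/- Let f : ℝ^d → ℝ be differentiable with ∇f(x) ∈ Range(P) for all relevant x (P a symmetric projection), L-smooth on an affine subspace x⁰ + Range(P), and let η ≤ 1/(2L). Let g be a random vector with 𝔼[g] = ∇f(x^k), let y^{k+1} = prox_{ηψ}(x^k − ηg) where ψ is convex with domain contained in x⁰ + Range(P). Then for any x ∈ x⁰ + Range(P): (1/η)𝔼[⟨x − x^k, x^k − y^{k+1}⟩] ≤ 𝔼[P(x) − P(y^{k+1}) − (1/(4η))‖y^{k+1} − x^k‖² + (η/2)‖g − ∇f(x^k)‖²_P] − D_f(x, x^k), where P(·) = f(·) + ψ(·) is the composite objective and D_f is the Bregman divergence of f. -/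
/-
The proximal step `y = prox_{ηψ}(z)`, `z = xᵏ - η g`, satisfies the variational inequality
`⟨z - y, x - y⟩ ≤ ηψ(x) - ηψ(y)`, which bounds `⟨x - xᵏ, xᵏ - y⟩` by
`η (ψ(x) - ψ(y) + ⟨g, x - y⟩) - ‖y - xᵏ‖²`. Split
`⟨g, x - y⟩ = ⟨g, x - xᵏ⟩ + ⟨∇f(xᵏ), xᵏ - y⟩ + ⟨g - ∇f(xᵏ), xᵏ - y⟩`: the middle term is
controlled by `L`-smoothness, the last by Young's inequality, and since `xᵏ - y ∈ Range(P)` only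
`‖g - ∇f(xᵏ)‖²_P` enters; `ηL ≤ 1/2` leaves `-‖y - xᵏ‖²/(4η)` over. Taking expectations,
`⟨g - ∇f(xᵏ), x - xᵏ⟩` integrates to zero by unbiasedness.
-/

open Matrix MeasureTheory Filter Topology

section DotProduct

variable {ι : Type*} [Fintype ι]

lemma dotProduct_self_nonneg {R : Type*} [CommRing R] [LinearOrder R] [IsStrictOrderedRing R]
    (v : ι → R) : 0 ≤ v ⬝ᵥ v :=
  Fintype.sum_nonneg fun _ => mul_self_nonneg _

lemma dotProduct_le_young {η : ℝ} (hη : 0 < η) (p q : ι → ℝ) :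
    p ⬝ᵥ q ≤ η / 2 * (p ⬝ᵥ p) + 1 / (2 * η) * (q ⬝ᵥ q) := by
  have hsq := dotProduct_self_nonneg (η • p - q)
  simp only [sub_dotProduct, dotProduct_sub, smul_dotProduct, dotProduct_smul, smul_eq_mul,
    dotProduct_comm q p] at hsq
  have hgap : η / 2 * (p ⬝ᵥ p) + 1 / (2 * η) * (q ⬝ᵥ q) - p ⬝ᵥ q
      = (η * (η * (p ⬝ᵥ p) - p ⬝ᵥ q) - (η * (p ⬝ᵥ q) - q ⬝ᵥ q)) / (2 * η) := by
    field_simp; ring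
  linarith [div_nonneg hsq (by positivity : (0 : ℝ) ≤ 2 * η)]

lemma dotProduct_mulVec_of_transpose_eq {R : Type*} [CommSemiring R] {P : Matrix ι ι R}
    (hP_sym : Pᵀ = P) (v w : ι → R) :
    v ⬝ᵥ P *ᵥ w = P *ᵥ v ⬝ᵥ w := by
  rw [dotProduct_mulVec, ← vecMul_transpose, hP_sym]

lemma dotProduct_mulVec_le_young {P : Matrix ι ι ℝ} (hP_proj : P * P = P) (hP_sym : Pᵀ = P)
    {η : ℝ} (hη : 0 < η) (v a : ι → ℝ) :
    v ⬝ᵥ P *ᵥ a ≤ η / 2 * (P *ᵥ v ⬝ᵥ v) + 1 / (2 * η) * (P *ᵥ a ⬝ᵥ P *ᵥ a) := by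
  have hPP (u : ι → ℝ) : P *ᵥ P *ᵥ u = P *ᵥ u := by rw [mulVec_mulVec, hP_proj]
  have hsym : v ⬝ᵥ P *ᵥ a = P *ᵥ v ⬝ᵥ P *ᵥ a := by
    rw [← dotProduct_mulVec_of_transpose_eq hP_sym, hPP]
  have hnorm : P *ᵥ v ⬝ᵥ P *ᵥ v = P *ᵥ v ⬝ᵥ v := by
    rw [dotProduct_mulVec_of_transpose_eq hP_sym, hPP]
  rw [hsym, ← hnorm]
  exact dotProduct_le_young hη _ _

/-- The optimality condition `z - y ∈ ∂(φ + ι_S)(y)` of the proximal step. -/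
lemma ConvexOn.dotProduct_sub_le_of_isMinOn {S : Set (ι → ℝ)} {φ : (ι → ℝ) → ℝ}
    (hφ : ConvexOn ℝ S φ) {y z u : ι → ℝ} (hy : y ∈ S) (hu : u ∈ S)
    (hmin : IsMinOn (fun v => φ v + 1 / 2 * ((v - z) ⬝ᵥ (v - z))) S y) :
    (z - y) ⬝ᵥ (u - y) ≤ φ u - φ y := by
  set c := (u - y) ⬝ᵥ (u - y)
  set A := φ u - φ y - (z - y) ⬝ᵥ (u - y)
  -- compare `y` with `y + t • (u - y)`, divide by `t`, and let `t → 0`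
  have hstep : ∀ t ∈ Set.Ioo (0 : ℝ) 1, 0 ≤ A + t / 2 * c := by
    rintro t ⟨ht0, ht1⟩
    have hmem : y + t • (u - y) ∈ S := hφ.1.add_smul_sub_mem hy hu ⟨ht0.le, ht1.le⟩
    have hφt : φ (y + t • (u - y)) ≤ (1 - t) * φ y + t * φ u := by
      have h := hφ.2 hy hu (sub_nonneg.mpr ht1.le) ht0.le (sub_add_cancel 1 t)
      rwa [show (1 - t) • y + t • u = y + t • (u - y) by module] at h
    have hquad : (y + t • (u - y) - z) ⬝ᵥ (y + t • (u - y) - z)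
        = (y - z) ⬝ᵥ (y - z) - 2 * t * ((z - y) ⬝ᵥ (u - y)) + t ^ 2 * c := by
      simp only [c, dotProduct, Pi.sub_apply, Pi.add_apply, Pi.smul_apply, smul_eq_mul,
        Finset.mul_sum, ← Finset.sum_add_distrib, ← Finset.sum_sub_distrib]
      exact Finset.sum_congr rfl fun i _ => by ring
    have h := isMinOn_iff.mp hmin _ hmem
    simp only [hquad] at h
    have : 0 ≤ t * (A + t / 2 * c) := by nlinarith
    exact nonneg_of_mul_nonneg_right (by linarith) ht0
  have hlim : Tendsto (fun t : ℝ => A + t / 2 * c) (𝓝[>] 0) (𝓝 A) := by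
    have hcont : Continuous fun t : ℝ => A + t / 2 * c := by fun_prop
    simpa using (hcont.tendsto 0).mono_left nhdsWithin_le_nhds
  have hA : 0 ≤ A := ge_of_tendsto hlim (Filter.mem_of_superset (Ioo_mem_nhdsGT one_pos) hstep)
  linarith

lemma prox_gradient_step_bound {P : Matrix ι ι ℝ} (hP_proj : P * P = P) (hP_sym : Pᵀ = P)
    {f ψ : (ι → ℝ) → ℝ} {L η : ℝ} (hη : 0 < η) (hηL : η * L ≤ 1 / 2)
    {x xk y g G a : ι → ℝ} (hrange : P *ᵥ a = xk - y)
    (hsmooth : f y ≤ f xk + G ⬝ᵥ (y - xk) + L / 2 * ((y - xk) ⬝ᵥ (y - xk)))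
    (hprox : (xk - η • g - y) ⬝ᵥ (x - y) ≤ η * ψ x - η * ψ y) :
    1 / η * ((x - xk) ⬝ᵥ (xk - y)) ≤
      (f x + ψ x) - (f y + ψ y) - 1 / (4 * η) * ((y - xk) ⬝ᵥ (y - xk))
        + η / 2 * (P *ᵥ (g - G) ⬝ᵥ (g - G))
      - (f x - f xk - G ⬝ᵥ (x - xk)) + (g - G) ⬝ᵥ (x - xk) := by
  set s := (y - xk) ⬝ᵥ (y - xk)
  set q := P *ᵥ (g - G) ⬝ᵥ (g - G)
  have hs : 0 ≤ s := dotProduct_self_nonneg _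
  have hprox' : (x - xk) ⬝ᵥ (xk - y) + s - η * (g ⬝ᵥ (x - y)) ≤ η * ψ x - η * ψ y := by
    convert hprox using 1
    simp only [s, dotProduct, Pi.sub_apply, Pi.smul_apply, smul_eq_mul, Finset.mul_sum,
      ← Finset.sum_add_distrib, ← Finset.sum_sub_distrib]
    exact Finset.sum_congr rfl fun i _ => by ring
  have hsplit : g ⬝ᵥ (x - y)
      = G ⬝ᵥ (x - xk) + (g - G) ⬝ᵥ (x - xk) - G ⬝ᵥ (y - xk) + (g - G) ⬝ᵥ (xk - y) := by
    simp only [dotProduct, Pi.sub_apply, ← Finset.sum_add_distrib, ← Finset.sum_sub_distrib]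
    exact Finset.sum_congr rfl fun i _ => by ring
  have hyoung : (g - G) ⬝ᵥ (xk - y) ≤ η / 2 * q + 1 / (2 * η) * s := by
    have h := dotProduct_mulVec_le_young hP_proj hP_sym hη (g - G) a
    rwa [hrange, ← neg_sub y xk, neg_dotProduct_neg, neg_sub] at h
  have hLs : η * (L / 2 * s) ≤ s / 4 := by nlinarith
  have hinv4 : η * (1 / (4 * η) * s) = s / 4 := by field_simp
  have hinv2 : η * (1 / (2 * η) * s) = s / 2 := by field_simp
  rw [one_div, inv_mul_le_iff₀ hη]
  linear_combination hprox' + η * hsmooth + η * hyoung + hLs + η * hsplit + hinv2 + hinv4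

lemma MeasureTheory.Integrable.dotProduct_const {Ω : Type*} [MeasurableSpace Ω] {μ : Measure Ω}
    {g : Ω → ι → ℝ} (hg : Integrable g μ) (c : ι → ℝ) :
    Integrable (fun ω => g ω ⬝ᵥ c) μ :=
  (LinearMap.toContinuousLinearMap ((dotProductBilin ℝ ℝ).flip c)).integrable_comp hg

lemma integral_dotProduct_const {Ω : Type*} [MeasurableSpace Ω] {μ : Measure Ω}
    {g : Ω → ι → ℝ} (hg : Integrable g μ) (c : ι → ℝ) :
    ∫ ω, g ω ⬝ᵥ c ∂μ = (∫ ω, g ω ∂μ) ⬝ᵥ c :=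
  (LinearMap.toContinuousLinearMap ((dotProductBilin ℝ ℝ).flip c)).integral_comp_comm hg

end DotProduct

lemma convex_setOf_mulVec_eq_sub {m n : Type*} [Fintype n] (A : Matrix m n ℝ) (x0 : m → ℝ) :
    Convex ℝ {u | ∃ a, A *ᵥ a = u - x0} := by
  rintro u ⟨a, ha⟩ v ⟨b, hb⟩ s t - - hst
  refine ⟨s • a + t • b, ?_⟩
  rw [mulVec_add, mulVec_smul, mulVec_smul, ha, hb]
  obtain rfl : t = 1 - s := by linarith
  module

theorem asvrcd_key_lemma_general
    {d : ℕ} {Ω : Type*} [MeasurableSpace Ω] (μ : Measure Ω) [IsProbabilityMeasure μ]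
    (Pm : Matrix (Fin d) (Fin d) ℝ)
    (hP_proj : Pm * Pm = Pm) (hP_sym : Pmᵀ = Pm)
    (x0 : Fin d → ℝ)
    (f : (Fin d → ℝ) → ℝ) (f' : (Fin d → ℝ) → (Fin d → ℝ))
    (L : ℝ)
    (hsmooth : ∀ u v : Fin d → ℝ, (∃ a, Pm.mulVec a = u - x0) →
      (∃ a, Pm.mulVec a = v - x0) →
      f u ≤ f v + f' v ⬝ᵥ (u - v) + (L / 2) * ((u - v) ⬝ᵥ (u - v)))
    (η : ℝ) (hη_pos : 0 < η) (hη : η ≤ 1 / (2 * L))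
    (ψ : (Fin d → ℝ) → ℝ) (hψ : ConvexOn ℝ Set.univ ψ)
    (xk : Fin d → ℝ) (hxk : ∃ a, Pm.mulVec a = xk - x0)
    (g : Ω → (Fin d → ℝ)) (hg_int : Integrable g μ)
    (hg_unbiased : ∫ ω, g ω ∂μ = f' xk)
    (y : Ω → (Fin d → ℝ))
    (hy_mem : ∀ ω, ∃ a, Pm.mulVec a = y ω - x0)
    -- `y ω` is the prox of `x^k - η g ω` for `ηψ` restricted to the affine subspace
    (hy_prox : ∀ ω, ∀ u : Fin d → ℝ, (∃ a, Pm.mulVec a = u - x0) →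
      η * ψ (y ω) + (1 / 2) * ((y ω - (xk - η • g ω)) ⬝ᵥ (y ω - (xk - η • g ω))) ≤
        η * ψ u + (1 / 2) * ((u - (xk - η • g ω)) ⬝ᵥ (u - (xk - η • g ω))))
    (x : Fin d → ℝ) (hx : ∃ a, Pm.mulVec a = x - x0)
    (hint1 : Integrable (fun ω => (x - xk) ⬝ᵥ (xk - y ω)) μ)
    (hint2 : Integrable (fun ω =>
      (f x + ψ x) - (f (y ω) + ψ (y ω))
        - (1 / (4 * η)) * ((y ω - xk) ⬝ᵥ (y ω - xk))
        + (η / 2) * (Pm.mulVec (g ω - f' xk) ⬝ᵥ (g ω - f' xk))) μ) :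
    (1 / η) * ∫ ω, (x - xk) ⬝ᵥ (xk - y ω) ∂μ ≤
      (∫ ω, ((f x + ψ x) - (f (y ω) + ψ (y ω))
        - (1 / (4 * η)) * ((y ω - xk) ⬝ᵥ (y ω - xk))
        + (η / 2) * (Pm.mulVec (g ω - f' xk) ⬝ᵥ (g ω - f' xk))) ∂μ)
      - (f x - f xk - f' xk ⬝ᵥ (x - xk)) := by
  have hηL : η * L ≤ 1 / 2 := by
    rcases le_or_gt L 0 with hL | hL
    · nlinarith
    · rw [le_div_iff₀ (by positivity)] at hη
      linarith
  have hηψ : ConvexOn ℝ {u | ∃ a, Pm *ᵥ a = u - x0} fun u => η * ψ u :=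
    (hψ.subset (Set.subset_univ _) (convex_setOf_mulVec_eq_sub Pm x0)).smul hη_pos.le
  choose ay hay using hy_mem
  obtain ⟨ak, hak⟩ := hxk
  have hpt (ω : Ω) := prox_gradient_step_bound hP_proj hP_sym hη_pos hηL (a := ak - ay ω)
    (by rw [mulVec_sub, hak, hay]; abel) (hsmooth _ _ ⟨ay ω, hay ω⟩ ⟨ak, hak⟩)
    (hηψ.dotProduct_sub_le_of_isMinOn ⟨ay ω, hay ω⟩ hx (isMinOn_iff.mpr (hy_prox ω)))
  have hg_sub : Integrable (fun ω => g ω - f' xk) μ := hg_int.sub (integrable_const _)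
  have hnoise : ∫ ω, (g ω - f' xk) ⬝ᵥ (x - xk) ∂μ = 0 := by
    rw [integral_dotProduct_const hg_sub, integral_sub hg_int (integrable_const _),
      hg_unbiased]
    simp
  have hmono := integral_mono (hint1.const_mul (1 / η))
    ((hint2.sub (integrable_const _)).add (hg_sub.dotProduct_const _)) hpt
  rwa [integral_const_mul, integral_add' (hint2.sub (integrable_const _))
    (hg_sub.dotProduct_const _), integral_sub' hint2 (integrable_const _), hnoise,
    integral_const, probReal_univ, one_smul, add_zero] at hmono

/-- Key one-step lemma for ASVRCD: for an unbiased stochastic gradient `g` of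
`f` at `x^k` and the prox step `y^{k+1} = prox_{ηψ}(x^k - ηg)` (constrained to
the affine subspace `x⁰ + Range(P)` containing the domain of `ψ`), with
`η ≤ 1/(2L)`, one has, for any `x` in the affine subspace,
`(1/η)𝔼⟨x - x^k, x^k - y^{k+1}⟩ ≤ 𝔼[P(x) - P(y^{k+1}) - ‖y^{k+1}-x^k‖²/(4η)
  + (η/2)‖g - ∇f(x^k)‖²_P] - D_f(x, x^k)`. -/
theorem asvrcd_key_lemma
    {d : ℕ} {Ω : Type*} [MeasurableSpace Ω] (μ : Measure Ω) [IsProbabilityMeasure μ]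
    (Pm : Matrix (Fin d) (Fin d) ℝ)
    (hP_proj : Pm * Pm = Pm) (hP_sym : Pmᵀ = Pm)
    (x0 : Fin d → ℝ)
    (f : (Fin d → ℝ) → ℝ) (f' : (Fin d → ℝ) → (Fin d → ℝ))
    (hgrad_range : ∀ z : Fin d → ℝ, (∃ u, Pm.mulVec u = z - x0) →
      Pm.mulVec (f' z) = f' z)
    (L : ℝ) (hL : 0 < L)
    (hsmooth : ∀ u v : Fin d → ℝ, (∃ a, Pm.mulVec a = u - x0) →
      (∃ a, Pm.mulVec a = v - x0) →
      f u ≤ f v + f' v ⬝ᵥ (u - v) + (L / 2) * ((u - v) ⬝ᵥ (u - v)))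
    (η : ℝ) (hη_pos : 0 < η) (hη : η ≤ 1 / (2 * L))
    (ψ : (Fin d → ℝ) → ℝ) (hψ : ConvexOn ℝ Set.univ ψ)
    (xk : Fin d → ℝ) (hxk : ∃ a, Pm.mulVec a = xk - x0)
    (g : Ω → (Fin d → ℝ)) (hg_int : Integrable g μ)
    (hg_unbiased : ∫ ω, g ω ∂μ = f' xk)
    (y : Ω → (Fin d → ℝ))
    (hy_mem : ∀ ω, ∃ a, Pm.mulVec a = y ω - x0)
    -- `y ω` is the prox of `x^k - η g ω` for `ηψ` restricted to the affine subspace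
    (hy_prox : ∀ ω, ∀ u : Fin d → ℝ, (∃ a, Pm.mulVec a = u - x0) →
      η * ψ (y ω) + (1 / 2) * ((y ω - (xk - η • g ω)) ⬝ᵥ (y ω - (xk - η • g ω))) ≤
        η * ψ u + (1 / 2) * ((u - (xk - η • g ω)) ⬝ᵥ (u - (xk - η • g ω))))
    (x : Fin d → ℝ) (hx : ∃ a, Pm.mulVec a = x - x0)
    (hint1 : Integrable (fun ω => (x - xk) ⬝ᵥ (xk - y ω)) μ)
    (hint2 : Integrable (fun ω =>
      (f x + ψ x) - (f (y ω) + ψ (y ω))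
        - (1 / (4 * η)) * ((y ω - xk) ⬝ᵥ (y ω - xk))
        + (η / 2) * (Pm.mulVec (g ω - f' xk) ⬝ᵥ (g ω - f' xk))) μ) :
    (1 / η) * ∫ ω, (x - xk) ⬝ᵥ (xk - y ω) ∂μ ≤
      (∫ ω, ((f x + ψ x) - (f (y ω) + ψ (y ω))
        - (1 / (4 * η)) * ((y ω - xk) ⬝ᵥ (y ω - xk))
        + (η / 2) * (Pm.mulVec (g ω - f' xk) ⬝ᵥ (g ω - f' xk))) ∂μ)
      - (f x - f xk - f' xk ⬝ᵥ (x - xk)) :=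
  asvrcd_key_lemma_general μ Pm hP_proj hP_sym x0 f f' L hsmooth η hη_pos hη ψ hψ xk hxk g hg_int
    hg_unbiased y hy_mem hy_prox x hx hint1 hint2
end
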